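/- arXiv:1906.11043 — 3 statements merged into one kernel-verified Lean document; each statement's English description precedes it below -/
import Mathlib

section
/- Suppose ‖X‖ is regularly varying with index −α, i.e. P(‖X‖ > tx)/P(‖X‖ > t) → x^{−α} as t → ∞ for every x > 0, where α > 0. Then for every τ ∈ [0, α) there exists t_0 > 0 such that for all t ≥ t_0: E[(‖X‖/t)^τ | ‖X‖ > t] ≤ 1 + 2τ/(α − τ). -/
open MeasureTheory ProbabilityTheory Filter Module
open scoped Pointwise

noncomputable section

/-- `ℝ^d` with the Euclidean norm. -/
abbrev Euc (d : ℕ) := EuclideanSpace ℝ (Fin d)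

/-- The orthogonal projection onto a linear subspace `V` of `ℝ^d`,
as a map from `ℝ^d` to itself. -/
def proj {d : ℕ} (V : Submodule ℝ (Euc d)) : Euc d →L[ℝ] Euc d :=
  V.subtypeL.comp (V.orthogonalProjectionOnto)

/-- The orthogonal projection onto the orthogonal complement of `V` (denoted `Π_V^⊥`). -/
def projPerp {d : ℕ} (V : Submodule ℝ (Euc d)) : Euc d →L[ℝ] Euc d := proj Vᗮ

/-- The metric `ρ(V,W) := ‖Π_V − Π_W‖_op` on subspaces of `ℝ^d`. -/
def rho {d : ℕ} (V W : Submodule ℝ (Euc d)) : ℝ := ‖proj V - proj W‖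

/-- `X` is regularly varying with index `α > 0` and limit measure `μlim`:
there is a normalizing function `b` such that `b(t)⁻¹ P(X ∈ tB) → μlim B` for all Borel sets `B`
bounded away from the origin with `μlim`-null boundary; `μlim` is a nonzero measure on
`ℝ^d ∖ {0}`, finite on sets bounded away from `0`, with `μlim {x : ‖x‖ > 1} > 0`. -/
structure RegVar {d : ℕ} {Ω : Type*} [MeasurableSpace Ω] (P : Measure Ω)
    (X : Ω → Euc d) (α : ℝ) (μlim : Measure (Euc d)) : Prop where
  alpha_pos : 0 < α
  meas : Measurable X
  ne_zero : μlim ≠ 0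
  zero : μlim {0} = 0
  finite : ∀ B : Set (Euc d), (∃ r > 0, ∀ x ∈ B, r ≤ ‖x‖) → μlim B < ⊤
  unit_pos : 0 < μlim {x | 1 < ‖x‖}
  conv : ∃ b : ℝ → ℝ, (∀ t : ℝ, 0 < t → 0 < b t) ∧ ∀ B : Set (Euc d), MeasurableSet B →
    (∃ r > 0, ∀ x ∈ B, r ≤ ‖x‖) → μlim (frontier B) = 0 →
    Tendsto (fun t : ℝ => (b t)⁻¹ * (P {a | X a ∈ t • B}).toReal) atTop
      (nhds (μlim B).toReal)

/-- `P_∞ := μ(·)/μ({x : ‖x‖ > 1})`, a probability measure concentrated on `{x : ‖x‖ > 1}`. -/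
def Pinf {d : ℕ} (μlim : Measure (Euc d)) : Measure (Euc d) :=
  (μlim {x | 1 < ‖x‖})⁻¹ • μlim.restrict {x | 1 < ‖x‖}

/-- The homogeneity scaling condition on the scaling function `ω`: for some
`β ∈ (1 − α/2, 1]`, `ω(λx) = λ^{−β} ω(x)` for all `λ > 0`, and `ω` is bounded on the
unit sphere. -/
structure ScalingCond {d : ℕ} (ω : Euc d → ℝ) (α β : ℝ) : Prop where
  lb : 1 - α / 2 < β
  ub : β ≤ 1
  pos : ∀ x, 0 < ω x
  meas : Measurable ω
  homog : ∀ l : ℝ, 0 < l → ∀ x : Euc d, x ≠ 0 → ω (l • x) = l ^ (-β) * ω x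
  bdd : ∃ c : ℝ, ∀ x : Euc d, ‖x‖ = 1 → ω x ≤ c

/-- `θ(x) := ω(x) x`. -/
def theta {d : ℕ} (ω : Euc d → ℝ) (x : Euc d) : Euc d := ω x • x

/-- `θ_t(x) := ω(x) x 1{‖x‖ > t}`. -/
def thetaT {d : ℕ} (ω : Euc d → ℝ) (t : ℝ) (x : Euc d) : Euc d :=
  if t < ‖x‖ then ω x • x else 0

/-- The limit risk `R_∞(V) := ∫ ‖Π_V^⊥ θ(x)‖² P_∞(dx)`. -/
def Rinf {d : ℕ} (μlim : Measure (Euc d)) (ω : Euc d → ℝ) (V : Submodule ℝ (Euc d)) : ℝ :=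
  ∫ x, ‖projPerp V (theta ω x)‖ ^ 2 ∂(Pinf μlim)

/-- The risk at finite threshold `t`:  `R_t(V) := E[‖Π_V^⊥ Θ‖² | ‖X‖ > t]`. -/
def Rt {d : ℕ} {Ω : Type*} [MeasurableSpace Ω] (P : Measure Ω) (X : Ω → Euc d)
    (ω : Euc d → ℝ) (t : ℝ) (V : Submodule ℝ (Euc d)) : ℝ :=
  ∫ a, ‖projPerp V (theta ω (X a))‖ ^ 2 ∂(P[|{a | t < ‖X a‖}])

/-- The `(k+1)`-st largest value among `‖X_1‖, …, ‖X_n‖` (the empirical `1 - k/n` quantile). -/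
def hatT {d : ℕ} {Ω : Type*} (Xs : ℕ → Ω → Euc d) (n k : ℕ) (a : Ω) : ℝ :=
  sInf {t : ℝ | {i : ℕ | i < n ∧ t < ‖Xs i a‖}.ncard ≤ k}

/-- The empirical risk `R_{n,k}(V) := k⁻¹ ∑_{i=1}^n ‖Π_V^⊥ Θ_{i,t̂_{n,k}}‖²`. -/
def Rnk {d : ℕ} {Ω : Type*} (Xs : ℕ → Ω → Euc d) (ω : Euc d → ℝ) (n k : ℕ)
    (V : Submodule ℝ (Euc d)) (a : Ω) : ℝ :=
  (k : ℝ)⁻¹ * ∑ i ∈ Finset.range n, ‖projPerp V (thetaT ω (hatT Xs n k a) (Xs i a))‖ ^ 2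

/-- `t_{n,k} := F_{‖X‖}^←(1 − k/n)`, the `(1-k/n)`-quantile of `‖X‖`. -/
def tnk {d : ℕ} {Ω : Type*} [MeasurableSpace Ω] (P : Measure Ω) (X : Ω → Euc d)
    (n k : ℕ) : ℝ :=
  sInf {x : ℝ | 1 - (k : ℝ) / n ≤ (P {a | ‖X a‖ ≤ x}).toReal}

/-- The cdf of `‖X‖` is continuous in the tail. -/
def TailContinuous {d : ℕ} {Ω : Type*} [MeasurableSpace Ω] (P : Measure Ω)
    (X : Ω → Euc d) : Prop :=
  ∃ t₀ : ℝ, ContinuousOn (fun x : ℝ => (P {a | ‖X a‖ ≤ x}).toReal) (Set.Ici t₀)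

/-- `Xs 1, Xs 2, …` are i.i.d. copies of `X`. -/
def IIDCopies {d : ℕ} {Ω : Type*} [MeasurableSpace Ω] (P : Measure Ω)
    (X : Ω → Euc d) (Xs : ℕ → Ω → Euc d) : Prop :=
  iIndepFun Xs P ∧ ∀ i, IdentDistrib (Xs i) X P P

/-- The outer product `z zᵀ` of a vector `z ∈ ℝ^d` with itself, as a linear map. -/
def outer {d : ℕ} (z : Euc d) : Euc d →L[ℝ] Euc d := (innerSL ℝ z).smulRight z

/-- The trace of a linear map on `ℝ^d`. -/
def trOp {d : ℕ} (A : Euc d →L[ℝ] Euc d) : ℝ := LinearMap.trace ℝ (Euc d) (A : Euc d →ₗ[ℝ] Euc d)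

/-- The squared Hilbert–Schmidt (Frobenius) norm `‖A‖²_HS = tr(AAᵀ)`,
computed in the standard orthonormal basis. -/
def hsNormSq {d : ℕ} (A : Euc d →L[ℝ] Euc d) : ℝ :=
  ∑ i : Fin d, ‖A (EuclideanSpace.single i 1)‖ ^ 2

/-- `π_t := P(‖X‖ > t)`. -/
def tailP {d : ℕ} {Ω : Type*} [MeasurableSpace Ω] (P : Measure Ω) (X : Ω → Euc d)
    (t : ℝ) : ℝ := (P {a | t < ‖X a‖}).toReal

/-- `Σ_t := E[Θ Θᵀ | ‖X‖ > t]`, the second-moment matrix of the rescaled exceedances. -/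
def Sigt {d : ℕ} {Ω : Type*} [MeasurableSpace Ω] (P : Measure Ω) (X : Ω → Euc d)
    (ω : Euc d → ℝ) (t : ℝ) : Euc d →L[ℝ] Euc d :=
  ∫ a, outer (theta ω (X a)) ∂(P[|{a | t < ‖X a‖}])

/-- `S_t := E[‖Θ‖⁴ | ‖X‖ > t] − π_t tr(Σ_t²)`. -/
def St {d : ℕ} {Ω : Type*} [MeasurableSpace Ω] (P : Measure Ω) (X : Ω → Euc d)
    (ω : Euc d → ℝ) (t : ℝ) : ℝ :=
  (∫ a, ‖theta ω (X a)‖ ^ 4 ∂(P[|{a | t < ‖X a‖}])) -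
    tailP P X t * trOp (Sigt P X ω t ∘L Sigt P X ω t)

/-- The deviation functional
`φ_t^+(x_1,…,x_n) := sup_{V ∈ 𝒱_p} ( n⁻¹ ∑ᵢ ‖Π_V^⊥ θ_t(xᵢ)‖² − E‖Π_V^⊥ θ_t(X)‖² )`. -/
def phiPlus {d : ℕ} {Ω : Type*} [MeasurableSpace Ω] (P : Measure Ω) (X : Ω → Euc d)
    (ω : Euc d → ℝ) (p : ℕ) (t : ℝ) (n : ℕ) (x : ℕ → Euc d) : ℝ :=
  ⨆ V : {V : Submodule ℝ (Euc d) // finrank ℝ V = p},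
    ((n : ℝ)⁻¹ * ∑ i ∈ Finset.range n, ‖projPerp V.1 (thetaT ω t (x i))‖ ^ 2 -
      ∫ a, ‖projPerp V.1 (thetaT ω t (X a))‖ ^ 2 ∂P)

/-- The deviation functional
`φ_t^-(x_1,…,x_n) := sup_{V ∈ 𝒱_p} −( n⁻¹ ∑ᵢ ‖Π_V^⊥ θ_t(xᵢ)‖² − E‖Π_V^⊥ θ_t(X)‖² )`. -/
def phiMinus {d : ℕ} {Ω : Type*} [MeasurableSpace Ω] (P : Measure Ω) (X : Ω → Euc d)
    (ω : Euc d → ℝ) (p : ℕ) (t : ℝ) (n : ℕ) (x : ℕ → Euc d) : ℝ :=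
  ⨆ V : {V : Submodule ℝ (Euc d) // finrank ℝ V = p},
    -((n : ℝ)⁻¹ * ∑ i ∈ Finset.range n, ‖projPerp V.1 (thetaT ω t (x i))‖ ^ 2 -
      ∫ a, ‖projPerp V.1 (thetaT ω t (X a))‖ ^ 2 ∂P)

section AuxStmt2
open Set
open scoped ENNReal NNReal

private lemma geom_id (m : ℝ) : ∀ K : ℕ, m + (m - 1) * ∑ k ∈ Finset.range K, m ^ (k + 1) = m ^ (K + 1) := by
  intro K
  induction K with
  | zero => simp
  | succ K ih =>
    rw [Finset.sum_range_succ, mul_add, ← add_assoc, ih]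
    ring

lemma limit_G {τ c : ℝ} (hc : c < 0) :
    Tendsto (fun l : ℝ => l ^ τ + (l ^ τ - 1) * (l ^ c * (1 - l ^ c)⁻¹))
      (nhdsWithin 1 (Ioi 1)) (nhds (1 + τ * (1 * (-c)⁻¹))) := by
  have h1 : (1:ℝ) ≠ 0 := one_ne_zero
  have hdτ : HasDerivAt (fun x : ℝ => x ^ τ) τ 1 := by
    have := Real.hasDerivAt_rpow_const (x := 1) (p := τ) (Or.inl h1)
    simpa using this
  have hdc : HasDerivAt (fun x : ℝ => x ^ c) c 1 := by
    have := Real.hasDerivAt_rpow_const (x := 1) (p := c) (Or.inl h1)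
    simpa using this
  have hsτ : Tendsto (slope (fun x : ℝ => x ^ τ) 1) (nhdsWithin 1 (Ioi 1)) (nhds τ) :=
    (hasDerivAt_iff_tendsto_slope.mp hdτ).mono_left
      (nhdsWithin_mono 1 (fun x hx => ne_of_gt hx))
  have hsc : Tendsto (slope (fun x : ℝ => x ^ c) 1) (nhdsWithin 1 (Ioi 1)) (nhds c) :=
    (hasDerivAt_iff_tendsto_slope.mp hdc).mono_left
      (nhdsWithin_mono 1 (fun x hx => ne_of_gt hx))
  have hτ1 : Tendsto (fun l : ℝ => l ^ τ) (nhdsWithin 1 (Ioi 1)) (nhds 1) := by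
    have : ContinuousAt (fun l : ℝ => l ^ τ) 1 :=
      (Real.continuousAt_rpow_const 1 τ (Or.inl h1))
    simpa using this.tendsto.mono_left nhdsWithin_le_nhds
  have hc1 : Tendsto (fun l : ℝ => l ^ c) (nhdsWithin 1 (Ioi 1)) (nhds 1) := by
    have : ContinuousAt (fun l : ℝ => l ^ c) 1 :=
      (Real.continuousAt_rpow_const 1 c (Or.inl h1))
    simpa using this.tendsto.mono_left nhdsWithin_le_nhds
  have haux : Tendsto (fun l : ℝ => l ^ τ +
      slope (fun x : ℝ => x ^ τ) 1 l * (l ^ c * (-(slope (fun x : ℝ => x ^ c) 1 l))⁻¹))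
      (nhdsWithin 1 (Ioi 1)) (nhds (1 + τ * (1 * (-c)⁻¹))) := by
    refine hτ1.add (hsτ.mul (hc1.mul (Tendsto.inv₀ hsc.neg ?_)))
    simpa using ne_of_gt (neg_pos.mpr hc)
  refine haux.congr' ?_
  filter_upwards [self_mem_nhdsWithin] with l hl
  have hl1 : (1:ℝ) < l := hl
  have hlne : l - 1 ≠ 0 := sub_ne_zero.mpr (ne_of_gt hl1)
  have hlc : l ^ c < 1 := Real.rpow_lt_one_of_one_lt_of_neg hl1 hc
  have h1c : 1 - l ^ c ≠ 0 := sub_ne_zero.mpr (ne_of_lt hlc).symm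
  simp only [slope_def_field, div_eq_mul_inv]
  rw [Real.one_rpow, Real.one_rpow]
  have h1c' : l ^ c - 1 ≠ 0 := sub_ne_zero.mpr (ne_of_lt hlc)
  field_simp
  ring

end AuxStmt2

open scoped ENNReal NNReal

/-- **Moment bound (Eq. (6)).** If `‖X‖` is regularly varying with index `−α`, `α > 0`,
then for every `τ ∈ [0, α)` there is `t₀ > 0` such that for all `t ≥ t₀`,
`E[(‖X‖/t)^τ | ‖X‖ > t] ≤ 1 + 2τ/(α − τ)`. -/
theorem stmt2 {d : ℕ} {Ω : Type*} [MeasurableSpace Ω] (P : Measure Ω) [IsProbabilityMeasure P]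
    (X : Ω → Euc d) (hX : Measurable X) (α : ℝ) (hα : 0 < α)
    (hpos : ∀ t : ℝ, 0 < t → 0 < P {a | t < ‖X a‖})
    (hrv : ∀ x : ℝ, 0 < x →
      Tendsto (fun t : ℝ => (P {a | t * x < ‖X a‖}).toReal / (P {a | t < ‖X a‖}).toReal)
        atTop (nhds (x ^ (-α))))
    (τ : ℝ) (hτ0 : 0 ≤ τ) (hτα : τ < α) :
    ∃ t₀ > (0:ℝ), ∀ t ≥ t₀,
      ∫ a, (‖X a‖ / t) ^ τ ∂(P[|{a | t < ‖X a‖}]) ≤ 1 + 2 * τ / (α - τ) := by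
  have hατ : 0 < α - τ := sub_pos.mpr hτα
  rcases eq_or_lt_of_le hτ0 with hτz | hτpos
  · refine ⟨1, one_pos, fun t ht => ?_⟩
    have ht0 : (0:ℝ) < t := lt_of_lt_of_le one_pos ht
    haveI := cond_isProbabilityMeasure (μ := P) (hpos t ht0).ne'
    rw [← hτz]
    have h2 : 2 * (0:ℝ) / (α - 0) = 0 := by norm_num
    simp only [Real.rpow_zero, integral_const, measure_univ, ENNReal.toReal_one, probReal_univ, smul_eq_mul,
      mul_one, one_mul]
    linarith
  -- main case
  set ρ : ℝ := τ + 3 * (α - τ) / 4 with hρ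
  have hρτ : τ < ρ := by rw [hρ]; linarith
  have hρα : ρ < α := by rw [hρ]; linarith
  have hc : τ - ρ < 0 := by linarith
  have hLB : 1 + τ * (1 * (-(τ - ρ))⁻¹) < 1 + 2 * τ / (α - τ) := by
    have h1 : -(τ - ρ) = 3 * (α - τ) / 4 := by rw [hρ]; ring
    have h2 : τ * (1 * (3 * (α - τ) / 4)⁻¹) = 4 * τ / (3 * (α - τ)) := by
      field_simp
    have h3 : 4 * τ / (3 * (α - τ)) < 2 * τ / (α - τ) := by
      rw [div_lt_div_iff₀ (by positivity) hατ]; nlinarith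
    rw [h1, h2]
    linarith
  have hev := Tendsto.eventually_le_const hLB (limit_G (τ := τ) hc)
  obtain ⟨l, hGl, hl1⟩ := (hev.and self_mem_nhdsWithin).exists
  have hl1 : (1:ℝ) < l := hl1
  have hlpos : (0:ℝ) < l := lt_trans one_pos hl1
  set m : ℝ := l ^ τ with hm
  set q : ℝ := l ^ (τ - ρ) with hq
  have hm1 : 1 < m := (Real.one_lt_rpow_iff_of_pos hlpos).mpr (Or.inl ⟨hl1, hτpos⟩)
  have hq1 : q < 1 := Real.rpow_lt_one_of_one_lt_of_neg hl1 hc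
  have hq0 : 0 < q := Real.rpow_pos_of_pos hlpos _
  have hr0 : 0 < l ^ (-ρ) := Real.rpow_pos_of_pos hlpos _
  have hmr : m * l ^ (-ρ) = q := by
    rw [hm, hq, ← Real.rpow_add hlpos, sub_eq_add_neg]
  have hrα : l ^ (-α) < l ^ (-ρ) := (Real.rpow_lt_rpow_left_iff hl1).mpr (by linarith)
  have hev2 := Tendsto.eventually_le_const hrα (hrv l hlpos)
  rw [eventually_atTop] at hev2
  obtain ⟨t₁, ht₁⟩ := hev2
  refine ⟨max t₁ 1, lt_of_lt_of_le one_pos (le_max_right _ _), fun t ht => ?_⟩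
  have ht0 : (0:ℝ) < t := lt_of_lt_of_le one_pos (le_trans (le_max_right _ _) ht)
  -- iterated tail bound
  have key : ∀ k : ℕ, (P {a | t * l ^ k < ‖X a‖}).toReal ≤
      (l ^ (-ρ)) ^ k * (P {a | t < ‖X a‖}).toReal := by
    intro k
    induction k with
    | zero => simp
    | succ k ih =>
      have hlk1 : (1:ℝ) ≤ l ^ k := one_le_pow₀ hl1.le
      have hs : t₁ ≤ t * l ^ k :=
        le_trans (le_trans (le_max_left _ _) ht) (le_mul_of_one_le_right ht0.le hlk1)
      have h2 := ht₁ (t * l ^ k) hs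
      have hspos : (0:ℝ) < t * l ^ k := by positivity
      have hden : 0 < (P {a | t * l ^ k < ‖X a‖}).toReal :=
        ENNReal.toReal_pos (hpos _ hspos).ne' (measure_ne_top P _)
      rw [div_le_iff₀ hden] at h2
      have hset : {a | t * l ^ (k + 1) < ‖X a‖} = {a | t * l ^ k * l < ‖X a‖} := by
        ext a
        rw [Set.mem_setOf_eq, Set.mem_setOf_eq, pow_succ, ← mul_assoc]
      calc (P {a | t * l ^ (k + 1) < ‖X a‖}).toReal
          ≤ l ^ (-ρ) * (P {a | t * l ^ k < ‖X a‖}).toReal := by rw [hset]; exact h2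
        _ ≤ l ^ (-ρ) * ((l ^ (-ρ)) ^ k * (P {a | t < ‖X a‖}).toReal) :=
            mul_le_mul_of_nonneg_left ih hr0.le
        _ = (l ^ (-ρ)) ^ (k + 1) * (P {a | t < ‖X a‖}).toReal := by ring
  set E : Set Ω := {a | t < ‖X a‖} with hE
  have hEm : MeasurableSet E := measurableSet_lt measurable_const hX.norm
  have hPE0 : P E ≠ 0 := (hpos t ht0).ne'
  have hPEtop : P E ≠ ⊤ := measure_ne_top P _
  haveI : IsProbabilityMeasure (P[|E]) := cond_isProbabilityMeasure hPE0
  set Ej : ℕ → Set Ω := fun j => {a | t * l ^ j < ‖X a‖} with hEj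
  have hEjm : ∀ j, MeasurableSet (Ej j) := fun j => measurableSet_lt measurable_const hX.norm
  have hEjsub : ∀ j, Ej j ⊆ E := by
    intro j a ha
    have hlk1 : (1:ℝ) ≤ l ^ j := one_le_pow₀ hl1.le
    have : t ≤ t * l ^ j := le_mul_of_one_le_right ht0.le hlk1
    exact lt_of_le_of_lt this ha
  -- the dominating function
  set g : Ω → ℝ≥0∞ := fun a => ENNReal.ofReal m + ENNReal.ofReal (m - 1) *
      ∑' k : ℕ, ENNReal.ofReal (m ^ (k + 1)) * (Ej (k + 1)).indicator 1 a with hg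
  -- pointwise bound
  have hpt : ∀ a ∈ E, ENNReal.ofReal ((‖X a‖ / t) ^ τ) ≤ g a := by
    intro a ha
    have hta : t < ‖X a‖ := ha
    obtain ⟨n, hn⟩ := pow_unbounded_of_one_lt (‖X a‖ / t) hl1
    have hex : ∃ n, ‖X a‖ ≤ t * l ^ n := ⟨n, le_of_lt (by rw [div_lt_iff₀ ht0] at hn; linarith)⟩
    set K := Nat.find hex with hK
    have hKs : ‖X a‖ ≤ t * l ^ K := Nat.find_spec hex
    have hKmin : ∀ j < K, t * l ^ j < ‖X a‖ := fun j hj => not_le.mp (Nat.find_min hex hj)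
    have hK0 : K ≠ 0 := by
      intro h
      rw [h, pow_zero, mul_one] at hKs
      linarith
    have h1 : ‖X a‖ / t ≤ l ^ K := by
      rw [div_le_iff₀ ht0]
      linarith
    have h2 : (‖X a‖ / t) ^ τ ≤ ((l : ℝ) ^ K) ^ τ :=
      Real.rpow_le_rpow (div_nonneg (by linarith) ht0.le) h1 hτ0
    have h3 : ((l : ℝ) ^ K) ^ τ = m ^ K := by
      rw [hm, ← Real.rpow_natCast l K, ← Real.rpow_natCast (l ^ τ) K,
        ← Real.rpow_mul hlpos.le, ← Real.rpow_mul hlpos.le, mul_comm]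
    have hmK : (‖X a‖ / t) ^ τ ≤ m ^ K := h3 ▸ h2
    have hsum : ∑ k ∈ Finset.range (K - 1), ENNReal.ofReal (m ^ (k + 1)) ≤
        ∑' k : ℕ, ENNReal.ofReal (m ^ (k + 1)) * (Ej (k + 1)).indicator 1 a := by
      have hcongr : ∀ k ∈ Finset.range (K - 1), ENNReal.ofReal (m ^ (k + 1)) =
          ENNReal.ofReal (m ^ (k + 1)) * (Ej (k + 1)).indicator 1 a := by
        intro k hk
        have hkK : k + 1 < K := by
          have := Finset.mem_range.mp hk
          omega
        have hmem : a ∈ Ej (k + 1) := hKmin (k + 1) hkK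
        rw [Set.indicator_of_mem hmem, Pi.one_apply, mul_one]
      rw [Finset.sum_congr rfl hcongr]
      exact ENNReal.sum_le_tsum _
    calc ENNReal.ofReal ((‖X a‖ / t) ^ τ)
        ≤ ENNReal.ofReal (m ^ K) := ENNReal.ofReal_le_ofReal hmK
      _ = ENNReal.ofReal (m + (m - 1) * ∑ k ∈ Finset.range (K - 1), m ^ (k + 1)) := by
          rw [geom_id m (K - 1), Nat.sub_add_cancel (Nat.one_le_iff_ne_zero.mpr hK0)]
      _ = ENNReal.ofReal m + ENNReal.ofReal (m - 1) *
            ∑ k ∈ Finset.range (K - 1), ENNReal.ofReal (m ^ (k + 1)) := by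
          rw [ENNReal.ofReal_add (by linarith) (mul_nonneg (by linarith)
              (Finset.sum_nonneg fun i _ => pow_nonneg (by linarith) _)),
            ENNReal.ofReal_mul (by linarith),
            ENNReal.ofReal_sum_of_nonneg (fun i _ => pow_nonneg (by linarith) _)]
      _ ≤ g a := add_le_add_right (mul_le_mul_right hsum _) _
  -- measure bound for conditional measure
  have hμEj : ∀ j : ℕ, (P[|E]) (Ej j) ≤ ENNReal.ofReal ((l ^ (-ρ)) ^ j) := by
    intro j
    rw [cond_apply hEm, Set.inter_eq_self_of_subset_right (hEjsub j)]
    have hb : P (Ej j) ≤ ENNReal.ofReal ((l ^ (-ρ)) ^ j) * P E := by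
      rw [← ENNReal.ofReal_toReal (measure_ne_top P (Ej j))]
      calc ENNReal.ofReal ((P (Ej j)).toReal)
          ≤ ENNReal.ofReal ((l ^ (-ρ)) ^ j * (P E).toReal) := ENNReal.ofReal_le_ofReal (key j)
        _ = ENNReal.ofReal ((l ^ (-ρ)) ^ j) * P E := by
            rw [ENNReal.ofReal_mul (pow_nonneg hr0.le j), ENNReal.ofReal_toReal hPEtop]
    calc (P E)⁻¹ * P (Ej j) ≤ (P E)⁻¹ * (ENNReal.ofReal ((l ^ (-ρ)) ^ j) * P E) :=
          mul_le_mul_right hb _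
      _ = ENNReal.ofReal ((l ^ (-ρ)) ^ j) * ((P E)⁻¹ * P E) := by ring
      _ = ENNReal.ofReal ((l ^ (-ρ)) ^ j) := by
          rw [ENNReal.inv_mul_cancel hPE0 hPEtop, mul_one]
  -- integral computation
  have hae : ∀ᵐ a ∂(P[|E]), a ∈ E := by
    rw [ProbabilityTheory.cond]
    exact Measure.ae_smul_measure (ae_restrict_mem hEm) _
  have hfmeas : Measurable (fun a => (‖X a‖ / t) ^ τ) := by fun_prop
  have hnn : 0 ≤ᵐ[P[|E]] fun a => (‖X a‖ / t) ^ τ :=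
    hae.mono fun a ha =>
      Real.rpow_nonneg (div_nonneg (le_of_lt (lt_trans ht0 ha)) ht0.le) τ
  rw [integral_eq_lintegral_of_nonneg_ae hnn hfmeas.aestronglyMeasurable]
  have hB0 : 0 ≤ 1 + 2 * τ / (α - τ) := by
    have : 0 ≤ 2 * τ / (α - τ) := div_nonneg (by linarith) hατ.le
    linarith
  refine ENNReal.toReal_le_of_le_ofReal hB0 ?_
  have hSmeas : Measurable (fun a => ∑' k : ℕ, ENNReal.ofReal (m ^ (k + 1)) *
      (Ej (k + 1)).indicator 1 a) := by
    apply Measurable.ennreal_tsum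
    intro k
    exact measurable_const.mul ((measurable_one).indicator (hEjm (k + 1)))
  calc ∫⁻ a, ENNReal.ofReal ((‖X a‖ / t) ^ τ) ∂(P[|E])
      ≤ ∫⁻ a, g a ∂(P[|E]) := lintegral_mono_ae (hae.mono (fun a ha => hpt a ha))
    _ = ENNReal.ofReal m + ENNReal.ofReal (m - 1) *
          ∑' k : ℕ, ENNReal.ofReal (m ^ (k + 1)) * (P[|E]) (Ej (k + 1)) := by
        rw [hg]
        rw [lintegral_add_left measurable_const, lintegral_const, measure_univ, mul_one,
          lintegral_const_mul _ hSmeas,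
          lintegral_tsum (f := fun k a => ENNReal.ofReal (m ^ (k + 1)) * (Ej (k + 1)).indicator 1 a) (fun k => (measurable_const.mul
            ((measurable_one).indicator (hEjm (k + 1)))).aemeasurable)]
        congr 2
        exact tsum_congr fun k => by
          rw [lintegral_const_mul _ ((measurable_one).indicator (hEjm (k + 1))),
            lintegral_indicator_one (hEjm (k + 1))]
    _ ≤ ENNReal.ofReal m + ENNReal.ofReal (m - 1) *
          ∑' k : ℕ, ENNReal.ofReal (q ^ (k + 1)) := by
        refine add_le_add_right (mul_le_mul_right (ENNReal.tsum_le_tsum (fun k => ?_)) _) _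
        calc ENNReal.ofReal (m ^ (k + 1)) * (P[|E]) (Ej (k + 1))
            ≤ ENNReal.ofReal (m ^ (k + 1)) * ENNReal.ofReal ((l ^ (-ρ)) ^ (k + 1)) :=
              mul_le_mul_right (hμEj (k + 1)) _
          _ = ENNReal.ofReal (q ^ (k + 1)) := by
              rw [← ENNReal.ofReal_mul (by positivity), ← mul_pow, hmr]
    _ = ENNReal.ofReal m + ENNReal.ofReal (m - 1) * ENNReal.ofReal (q * (1 - q)⁻¹) := by
        congr 1
        congr 1
        have hsummable : Summable (fun k : ℕ => q ^ (k + 1)) := by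
          have := (summable_geometric_of_lt_one hq0.le hq1).mul_left q
          refine this.congr fun k => ?_
          rw [pow_succ, mul_comm]
        rw [← ENNReal.ofReal_tsum_of_nonneg (fun k => pow_nonneg hq0.le _) hsummable]
        congr 1
        have h1 : ∀ k : ℕ, q ^ (k + 1) = q * q ^ k := fun k => by rw [pow_succ, mul_comm]
        rw [tsum_congr h1, tsum_mul_left, tsum_geometric_of_lt_one hq0.le hq1]
    _ = ENNReal.ofReal (m + (m - 1) * (q * (1 - q)⁻¹)) := by
        rw [ENNReal.ofReal_add (by linarith)
            (mul_nonneg (by linarith) (mul_nonneg hq0.le (inv_nonneg.mpr (by linarith)))),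
          ENNReal.ofReal_mul (by linarith : (0:ℝ) ≤ m - 1)]
    _ ≤ ENNReal.ofReal (1 + 2 * τ / (α - τ)) := ENNReal.ofReal_le_ofReal hGl
end
end

section
/- Let V and W be p-dimensional linear subspaces of ℝ^d and let ρ(V,W) := ‖Π_V − Π_W‖_op. Then the Hausdorff distance between V ∩ 𝕊^{d−1} and W ∩ 𝕊^{d−1} is at most √(2(1 − √(1 − ρ(V,W)²))); in particular, for every x ∈ V with ‖x‖ = 1 there exists y ∈ W with ‖y‖ = 1 such that ‖x − y‖² ≤ 2(1 − √(1 − ρ(V,W)²)). -/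
open MeasureTheory ProbabilityTheory Filter Module
open scoped Pointwise RealInnerProductSpace

noncomputable section

lemma rho_comm {d : ℕ} (V W : Submodule ℝ (Euc d)) : rho V W = rho W V := by
  unfold rho; rw [← norm_neg, neg_sub]

lemma key {d : ℕ} (V W : Submodule ℝ (Euc d)) (hWne : W ≠ ⊥)
    (x : Euc d) (hx : x ∈ V) (hx1 : ‖x‖ = 1) :
    ∃ y : Euc d, y ∈ W ∧ ‖y‖ = 1 ∧
      ‖x - y‖ ^ 2 ≤ 2 * (1 - Real.sqrt (1 - rho V W ^ 2)) := by
  set z : Euc d := (W.orthogonalProjectionOnto x : Euc d) with hzdef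
  have hzW : z ∈ W := (W.orthogonalProjectionOnto x).2
  have horth : ⟪x - z, z⟫ = 0 := by
    have h1 : x - z ∈ Wᗮ := Submodule.sub_starProjection_mem_orthogonal (K := W) x
    exact (Submodule.mem_orthogonal' W (x - z)).mp h1 z hzW
  have hxz : ⟪x, z⟫ = ‖z‖ ^ 2 := by
    have : ⟪x, z⟫ = ⟪x - z, z⟫ + ⟪z, z⟫ := by
      rw [← inner_add_left, sub_add_cancel]
    rw [this, horth, real_inner_self_eq_norm_sq]; ring
  have hpv : proj V x = x := by
    simp only [proj, ContinuousLinearMap.comp_apply, Submodule.subtypeL_apply]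
    exact Submodule.starProjection_eq_self_iff.mpr hx
  have hub : ‖x - z‖ ≤ rho V W := by
    have h1 : (proj V - proj W) x = x - z := by
      rw [ContinuousLinearMap.sub_apply, hpv, hzdef]; rfl
    have h2 := (proj V - proj W).le_opNorm x
    rw [h1, hx1, mul_one] at h2
    exact h2
  have hpyth : ‖z‖ ^ 2 = 1 - ‖x - z‖ ^ 2 := by
    have : ‖(x - z) + z‖ ^ 2 = ‖x - z‖ ^ 2 + 2 * ⟪x - z, z⟫ + ‖z‖ ^ 2 :=
      norm_add_sq_real _ _
    rw [horth, sub_add_cancel, hx1] at this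
    nlinarith
  have hsqle : 1 - rho V W ^ 2 ≤ ‖z‖ ^ 2 := by
    have : ‖x - z‖ ^ 2 ≤ rho V W ^ 2 :=
      pow_le_pow_left₀ (norm_nonneg _) hub 2
    linarith
  have hsqrt : Real.sqrt (1 - rho V W ^ 2) ≤ ‖z‖ := by
    calc Real.sqrt (1 - rho V W ^ 2) ≤ Real.sqrt (‖z‖ ^ 2) := Real.sqrt_le_sqrt hsqle
    _ = ‖z‖ := Real.sqrt_sq (norm_nonneg _)
  by_cases hz0 : z = 0
  · -- degenerate case
    obtain ⟨w, hwW, hwne⟩ := Submodule.exists_mem_ne_zero_of_ne_bot hWne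
    set y0 : Euc d := ‖w‖⁻¹ • w with hy0
    have hy0W : y0 ∈ W := W.smul_mem _ hwW
    have hy0n : ‖y0‖ = 1 := by
      rw [hy0, norm_smul, norm_inv, norm_norm, inv_mul_cancel₀ (norm_ne_zero_iff.mpr hwne)]
    have hs0 : Real.sqrt (1 - rho V W ^ 2) = 0 := by
      rw [hz0, norm_zero] at hsqrt
      exact le_antisymm hsqrt (Real.sqrt_nonneg _)
    rcases le_or_gt 0 (⟪x, y0⟫) with hpos | hneg
    · refine ⟨y0, hy0W, hy0n, ?_⟩
      have := norm_sub_sq_real x y0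
      rw [hx1, hy0n] at this
      rw [this, hs0]; nlinarith
    · refine ⟨-y0, W.neg_mem hy0W, by rw [norm_neg, hy0n], ?_⟩
      have := norm_sub_sq_real x (-y0)
      rw [hx1, norm_neg, hy0n, inner_neg_right] at this
      rw [this, hs0]; nlinarith
  · set y : Euc d := ‖z‖⁻¹ • z with hy
    have hyW : y ∈ W := W.smul_mem _ hzW
    have hzn : ‖z‖ ≠ 0 := norm_ne_zero_iff.mpr hz0
    have hyn : ‖y‖ = 1 := by
      rw [hy, norm_smul, norm_inv, norm_norm, inv_mul_cancel₀ hzn]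
    have hinner : ⟪x, y⟫ = ‖z‖ := by
      rw [hy, real_inner_smul_right, hxz]
      field_simp
    refine ⟨y, hyW, hyn, ?_⟩
    have := norm_sub_sq_real x y
    rw [hx1, hyn, hinner] at this
    rw [this]; nlinarith

/-- **Remark 1 (Hausdorff distance bound).** For `p`-dimensional subspaces `V, W` of `ℝ^d`,
the Hausdorff distance between `V ∩ 𝕊^{d−1}` and `W ∩ 𝕊^{d−1}` is at most
`√(2(1 − √(1 − ρ(V,W)²)))`; in particular for every unit vector `x ∈ V` there is a unit
vector `y ∈ W` with `‖x − y‖² ≤ 2(1 − √(1 − ρ(V,W)²))`. -/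
theorem stmt4 {d p : ℕ} (V W : Submodule ℝ (Euc d))
    (hV : finrank ℝ V = p) (hW : finrank ℝ W = p) :
    Metric.hausdorffDist ((V : Set (Euc d)) ∩ Metric.sphere 0 1)
        ((W : Set (Euc d)) ∩ Metric.sphere 0 1) ≤
      Real.sqrt (2 * (1 - Real.sqrt (1 - rho V W ^ 2))) ∧
    ∀ x : Euc d, x ∈ V → ‖x‖ = 1 → ∃ y : Euc d, y ∈ W ∧ ‖y‖ = 1 ∧
      ‖x - y‖ ^ 2 ≤ 2 * (1 - Real.sqrt (1 - rho V W ^ 2)) := by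
  have hBnonneg : 0 ≤ 2 * (1 - Real.sqrt (1 - rho V W ^ 2)) := by
    have h1 : Real.sqrt (1 - rho V W ^ 2) ≤ 1 := by
      calc Real.sqrt (1 - rho V W ^ 2) ≤ Real.sqrt 1 :=
        Real.sqrt_le_sqrt (by nlinarith [sq_nonneg (rho V W)])
      _ = 1 := Real.sqrt_one
    linarith
  have hdim : ∀ u : Euc d, u ∈ V → ‖u‖ = 1 → W ≠ ⊥ := by
    intro u hu hu1 hbot
    have hVne : V ≠ ⊥ := by
      intro h; rw [h, Submodule.mem_bot] at hu
      rw [hu, norm_zero] at hu1; exact one_ne_zero hu1.symm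
    have : 0 < finrank ℝ V := Module.finrank_pos_iff_exists_ne_zero.mpr
      ⟨⟨u, hu⟩, by simp; intro h; rw [h, norm_zero] at hu1; exact one_ne_zero hu1.symm⟩
    rw [hV, ← hW] at this
    rw [hbot] at this; simp at this
  have hdim' : ∀ u : Euc d, u ∈ W → ‖u‖ = 1 → V ≠ ⊥ := by
    intro u hu hu1 hbot
    have hWne : W ≠ ⊥ := by
      intro h; rw [h, Submodule.mem_bot] at hu
      rw [hu, norm_zero] at hu1; exact one_ne_zero hu1.symm
    have : 0 < finrank ℝ W := Module.finrank_pos_iff_exists_ne_zero.mpr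
      ⟨⟨u, hu⟩, by simp; intro h; rw [h, norm_zero] at hu1; exact one_ne_zero hu1.symm⟩
    rw [hW, ← hV] at this
    rw [hbot] at this; simp at this
  constructor
  · apply Metric.hausdorffDist_le_of_mem_dist (Real.sqrt_nonneg _)
    · rintro u ⟨huV, huS⟩
      rw [mem_sphere_zero_iff_norm] at huS
      obtain ⟨y, hyW, hy1, hle⟩ := key V W (hdim u huV huS) u huV huS
      refine ⟨y, ⟨hyW, mem_sphere_zero_iff_norm.mpr hy1⟩, ?_⟩
      rw [dist_eq_norm]
      calc ‖u - y‖ = Real.sqrt (‖u - y‖ ^ 2) := (Real.sqrt_sq (norm_nonneg _)).symm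
      _ ≤ Real.sqrt (2 * (1 - Real.sqrt (1 - rho V W ^ 2))) := Real.sqrt_le_sqrt hle
    · rintro u ⟨huW, huS⟩
      rw [mem_sphere_zero_iff_norm] at huS
      obtain ⟨y, hyV, hy1, hle⟩ := key W V (hdim' u huW huS) u huW huS
      rw [rho_comm W V] at hle
      refine ⟨y, ⟨hyV, mem_sphere_zero_iff_norm.mpr hy1⟩, ?_⟩
      rw [dist_eq_norm]
      calc ‖u - y‖ = Real.sqrt (‖u - y‖ ^ 2) := (Real.sqrt_sq (norm_nonneg _)).symm
      _ ≤ Real.sqrt (2 * (1 - Real.sqrt (1 - rho V W ^ 2))) := Real.sqrt_le_sqrt hle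
  · intro x hx hx1
    exact key V W (hdim x hx hx1) x hx hx1
end
end

section
/- Suppose the linear span V_0 of the support of μ has dimension p < d. Then for any linear subspace V of ℝ^d (of arbitrary dimension): R_∞(V) = 0 if and only if V_0 ⊆ V. Consequently, V_0 is the unique minimizer of R_∞ among all p-dimensional linear subspaces of ℝ^d. -/
open MeasureTheory ProbabilityTheory Filter Module
open scoped Pointwise

noncomputable section

/-- The linear span `V₀` of the (topological) support of the measure `μ`. -/
def suppSpan {d : ℕ} (μlim : Measure (Euc d)) : Submodule ℝ (Euc d) :=
  Submodule.span ℝ {x : Euc d | ∀ U ∈ nhds x, 0 < μlim U}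

section Aux

lemma projPerp_eq_zero_iff {d : ℕ} (V : Submodule ℝ (Euc d)) (x : Euc d) :
    projPerp V x = 0 ↔ x ∈ V := by
  have : projPerp V x = (Vᗮ.orthogonalProjectionOnto x : Euc d) := rfl
  rw [this, Submodule.coe_eq_zero, Submodule.orthogonalProjectionOnto_eq_zero_iff,
    Submodule.orthogonal_orthogonal]

lemma norm_projPerp_le {d : ℕ} (V : Submodule ℝ (Euc d)) (x : Euc d) :
    ‖projPerp V x‖ ≤ ‖x‖ := by
  calc ‖projPerp V x‖ = ‖Vᗮ.orthogonalProjectionOnto x‖ := rfl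
    _ ≤ ‖Vᗮ.orthogonalProjectionOnto‖ * ‖x‖ := (Vᗮ.orthogonalProjectionOnto).le_opNorm x
    _ ≤ 1 * ‖x‖ := by gcongr; exact Submodule.orthogonalProjectionOnto_norm_le Vᗮ
    _ = ‖x‖ := one_mul _

lemma projPerp_theta {d : ℕ} (ω : Euc d → ℝ) (V : Submodule ℝ (Euc d)) (x : Euc d) :
    projPerp V (theta ω x) = ω x • projPerp V x := by
  simp [theta, _root_.map_smul]

/-- Scale invariance of the support set. -/
lemma supp_smul {d : ℕ} (μlim : Measure (Euc d)) (α : ℝ)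
    (hhomog : ∀ c : ℝ, 0 < c → ∀ B : Set (Euc d), MeasurableSet B →
      μlim (c • B) = ENNReal.ofReal (c ^ (-α)) * μlim B)
    {x : Euc d} (hx : x ∈ {y : Euc d | ∀ U ∈ nhds y, 0 < μlim U})
    {l : ℝ} (hl : 0 < l) : l • x ∈ {y : Euc d | ∀ U ∈ nhds y, 0 < μlim U} := by
  intro U hU
  obtain ⟨O, hOU, hOopen, hmem⟩ := mem_nhds_iff.mp hU
  have hO' : IsOpen ((l⁻¹ : ℝ) • O) := hOopen.smul₀ (inv_ne_zero hl.ne')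
  have hxO : x ∈ (l⁻¹ : ℝ) • O := by
    refine ⟨l • x, hmem, ?_⟩
    exact inv_smul_smul₀ hl.ne' x
  have hpos : 0 < μlim ((l⁻¹ : ℝ) • O) := hx _ (hO'.mem_nhds hxO)
  have hkey : μlim O = ENNReal.ofReal (l ^ (-α)) * μlim ((l⁻¹ : ℝ) • O) := by
    have := hhomog l hl ((l⁻¹ : ℝ) • O) hO'.measurableSet
    rwa [smul_inv_smul₀ hl.ne'] at this
  refine lt_of_lt_of_le ?_ (measure_mono hOU)
  rw [hkey]
  exact ENNReal.mul_pos (by simp [ENNReal.ofReal_pos, Real.rpow_pos_of_pos hl]) hpos.ne'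

lemma compl_supp_null {d : ℕ} (μlim : Measure (Euc d)) :
    μlim {y : Euc d | ∀ U ∈ nhds y, 0 < μlim U}ᶜ = 0 := by
  apply measure_null_of_locally_null
  intro x hx
  simp only [Set.mem_compl_iff, Set.mem_setOf_eq, not_forall] at hx
  obtain ⟨U, hU, hU0⟩ := hx
  exact ⟨U, mem_nhdsWithin_of_mem_nhds hU, le_antisymm (not_lt.mp hU0) bot_le⟩

lemma Pinf_null {d : ℕ} (μlim : Measure (Euc d))
    (hfin : μlim {x : Euc d | 1 < ‖x‖} ≠ ⊤) {s : Set (Euc d)} (hs : MeasurableSet s) :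
    Pinf μlim s = 0 ↔ μlim (s ∩ {x : Euc d | 1 < ‖x‖}) = 0 := by
  rw [Pinf, Measure.smul_apply, smul_eq_mul, Measure.restrict_apply hs,
    mul_eq_zero]
  simp [ENNReal.inv_ne_zero.mpr hfin]

end Aux

/-- **Lemma 4.** Suppose the limit measure `μ` (nonzero, homogeneous of order `−α`, finite
away from `0`) has support whose linear span `V₀` has dimension `p < d`. Then for any
linear subspace `V` of `ℝ^d`: `R_∞(V) = 0 ↔ V₀ ⊆ V`; consequently `V₀` is the unique
minimizer of `R_∞` among `p`-dimensional subspaces. -/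
theorem stmt8 {d : ℕ} (μlim : Measure (Euc d)) (α : ℝ) (hα : 0 < α)
    (hne : μlim ≠ 0) (hzero : μlim {0} = 0)
    (hfin : ∀ B : Set (Euc d), (∃ r > 0, ∀ x ∈ B, r ≤ ‖x‖) → μlim B < ⊤)
    (hunit : 0 < μlim {x | 1 < ‖x‖})
    (hhomog : ∀ c : ℝ, 0 < c → ∀ B : Set (Euc d), MeasurableSet B →
      μlim (c • B) = ENNReal.ofReal (c ^ (-α)) * μlim B)
    (ω : Euc d → ℝ) (hωmeas : Measurable ω) (hωpos : ∀ x, 0 < ω x)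
    (hint : Integrable (fun x => ‖theta ω x‖ ^ 2) (Pinf μlim))
    (p : ℕ) (hpd : p < d) (hV0 : finrank ℝ (suppSpan μlim) = p) :
    (∀ V : Submodule ℝ (Euc d), Rinf μlim ω V = 0 ↔ suppSpan μlim ≤ V) ∧
    ∀ V : Submodule ℝ (Euc d), finrank ℝ V = p →
      Rinf μlim ω (suppSpan μlim) ≤ Rinf μlim ω V ∧
      (Rinf μlim ω V = Rinf μlim ω (suppSpan μlim) → V = suppSpan μlim) := by
  have hUtop : μlim {x : Euc d | 1 < ‖x‖} ≠ ⊤ :=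
    (hfin _ ⟨1, one_pos, fun x hx => le_of_lt hx⟩).ne
  have hθmeas : Measurable (theta ω) := hωmeas.smul measurable_id
  have hfmeas : ∀ V : Submodule ℝ (Euc d),
      Measurable fun x => ‖projPerp V (theta ω x)‖ ^ 2 := fun V =>
    (((projPerp V).continuous.norm.pow 2).measurable).comp hθmeas
  have hfint : ∀ V : Submodule ℝ (Euc d),
      Integrable (fun x => ‖projPerp V (theta ω x)‖ ^ 2) (Pinf μlim) := by
    intro V
    refine hint.mono (hfmeas V).aestronglyMeasurable (Filter.Eventually.of_forall fun x => ?_)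
    rw [Real.norm_eq_abs, Real.norm_eq_abs, abs_of_nonneg (by positivity),
      abs_of_nonneg (by positivity)]
    exact pow_le_pow_left₀ (norm_nonneg _) (norm_projPerp_le V _) 2
  have key : ∀ V : Submodule ℝ (Euc d), Rinf μlim ω V = 0 ↔ suppSpan μlim ≤ V := by
    intro V
    constructor
    · intro h0
      have hae : ∀ᵐ x ∂(Pinf μlim), ‖projPerp V (theta ω x)‖ ^ 2 = 0 := by
        have := (integral_eq_zero_iff_of_nonneg_ae
          (Filter.Eventually.of_forall fun x => by positivity) (hfint V)).mp h0
        filter_upwards [this] with x hx using hx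
      have hmeas' : MeasurableSet {x : Euc d | projPerp V (theta ω x) ≠ 0} := by
        have : {x : Euc d | projPerp V (theta ω x) ≠ 0} =
            {x : Euc d | ‖projPerp V (theta ω x)‖ ^ 2 ≠ 0} := by
          ext x; simp [pow_eq_zero_iff]
        rw [this]
        exact (hfmeas V (measurableSet_singleton 0)).compl
      have hPnull : Pinf μlim {x : Euc d | projPerp V (theta ω x) ≠ 0} = 0 := by
        have h2 := ae_iff.mp hae
        refine measure_mono_null ?_ h2
        intro x hx
        simp only [Set.mem_setOf_eq] at hx ⊢
        simpa [pow_eq_zero_iff] using hx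
      have hnull : μlim ({x : Euc d | projPerp V (theta ω x) ≠ 0} ∩
          {x : Euc d | 1 < ‖x‖}) = 0 := (Pinf_null μlim hUtop hmeas').mp hPnull
      rw [suppSpan, Submodule.span_le]
      intro x hx
      by_contra hxV
      have hx0 : x ≠ 0 := fun h => hxV (h ▸ V.zero_mem)
      have hnx : 0 < ‖x‖ := norm_pos_iff.mpr hx0
      set l : ℝ := 2 / ‖x‖ with hldef
      have hl : 0 < l := by positivity
      have hy : l • x ∈ {y : Euc d | ∀ U ∈ nhds y, 0 < μlim U} :=
        supp_smul μlim α hhomog hx hl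
      have hyU : 1 < ‖l • x‖ := by
        rw [norm_smul, Real.norm_eq_abs, abs_of_pos hl, hldef, div_mul_cancel₀ _ hnx.ne']
        norm_num
      have hyV : l • x ∉ (V : Set (Euc d)) := by
        intro h
        exact hxV (by simpa [inv_smul_smul₀ hl.ne'] using V.smul_mem l⁻¹ h)
      have hN : ((V : Set (Euc d))ᶜ ∩ {x : Euc d | 1 < ‖x‖}) ∈ nhds (l • x) := by
        refine IsOpen.mem_nhds ?_ ⟨hyV, hyU⟩
        exact ((Submodule.closed_of_finiteDimensional V).isOpen_compl).inter
          (isOpen_lt continuous_const continuous_norm)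
      have hpos := hy _ hN
      have hsub : ((V : Set (Euc d))ᶜ ∩ {x : Euc d | 1 < ‖x‖}) ⊆
          ({x : Euc d | projPerp V (theta ω x) ≠ 0} ∩ {x : Euc d | 1 < ‖x‖}) := by
        rintro z ⟨hz1, hz2⟩
        refine ⟨?_, hz2⟩
        simp only [Set.mem_setOf_eq]
        rw [projPerp_theta]
        refine smul_ne_zero (hωpos z).ne' ?_
        exact fun h => hz1 ((projPerp_eq_zero_iff V z).mp h)
      exact absurd (measure_mono_null hsub hnull) hpos.ne'
    · intro hle
      have hcompl : MeasurableSet ((suppSpan μlim : Set (Euc d))ᶜ) :=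
        (Submodule.closed_of_finiteDimensional (suppSpan μlim)).measurableSet.compl
      have h0 : Pinf μlim ((suppSpan μlim : Set (Euc d))ᶜ) = 0 := by
        rw [Pinf_null μlim hUtop hcompl]
        refine measure_mono_null ?_ (compl_supp_null μlim)
        intro z hz
        simp only [Set.mem_inter_iff, Set.mem_compl_iff] at hz ⊢
        exact fun hmem => hz.1 (Submodule.subset_span hmem)
      have hae : (fun x => ‖projPerp V (theta ω x)‖ ^ 2) =ᵐ[Pinf μlim] 0 := by
        have hmem : ∀ᵐ x ∂(Pinf μlim), x ∈ (suppSpan μlim : Set (Euc d)) := by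
          rw [ae_iff]
          exact h0
        filter_upwards [hmem] with x hx
        have hxV : x ∈ V := hle hx
        simp [projPerp_theta, (projPerp_eq_zero_iff V x).mpr hxV]
      exact integral_eq_zero_of_ae hae
  refine ⟨key, fun V hVp => ?_⟩
  have h0 : Rinf μlim ω (suppSpan μlim) = 0 := (key _).mpr le_rfl
  constructor
  · rw [h0]
    exact integral_nonneg fun x => by positivity
  · intro hEq
    rw [h0] at hEq
    have hle := (key V).mp hEq
    exact (Submodule.eq_of_le_of_finrank_eq hle (hV0.trans hVp.symm)).symm
end
end
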